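/- Let 1 < p ≤ θ. Then L(2) = 16 − 32pθ(p+1)/(θ+1) + 16pθ(p+1)²/(θ+1)² and L(2) < 0. -/
import Mathlib

noncomputable section

/-- The quartic polynomial `L`. -/
def Lpoly (p θ s : ℝ) : ℝ :=
  s ^ 4 - (16 * p * θ * (p + 1) / (θ + 1)) * s ^ 2
    + (16 * p * θ * (p + 1) * (p + θ + 2) / (θ + 1) ^ 2) * s
    - 16 * p * θ * (p + 1) ^ 2 / (θ + 1) ^ 2

/-- value of `L(2)` and `L(2) < 0`. -/
theorem stmt9 (p θ : ℝ) (hp : 1 < p) (hpθ : p ≤ θ) :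
    Lpoly p θ 2 =
      16 - 32 * p * θ * (p + 1) / (θ + 1) + 16 * p * θ * (p + 1) ^ 2 / (θ + 1) ^ 2 ∧
    Lpoly p θ 2 < 0 := by
  have hθ : (1:ℝ) < θ := lt_of_lt_of_le hp hpθ
  have hθ0 : θ + 1 ≠ 0 := by nlinarith
  have heq : Lpoly p θ 2 =
      16 - 32 * p * θ * (p + 1) / (θ + 1) + 16 * p * θ * (p + 1) ^ 2 / (θ + 1) ^ 2 := by
    unfold Lpoly
    field_simp
    ring
  refine ⟨heq, ?_⟩
  have h2 : (0:ℝ) < (θ + 1) ^ 2 := by positivity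
  rw [heq]
  have key : 16 - 32 * p * θ * (p + 1) / (θ + 1) + 16 * p * θ * (p + 1) ^ 2 / (θ + 1) ^ 2 =
      (16 * (θ + 1) ^ 2 + 16 * p * θ * (p + 1) * (p - 2 * θ - 1)) / (θ + 1) ^ 2 := by
    field_simp; ring
  rw [key]
  apply div_neg_of_neg_of_pos _ h2
  nlinarith [mul_pos (sub_pos.mpr hp) (sub_pos.mpr hθ), mul_pos (mul_pos (lt_trans one_pos hp) (lt_trans one_pos hθ)) (sub_pos.mpr hθ), sq_nonneg (θ - 1), sq_nonneg (p*θ - 1)]
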